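/- arXiv:1810.10250 — 7 statements merged into one kernel-verified Lean document; each statement's English description precedes it below -/
import Mathlib

section
/- Every functionally bounded subset of a Tychonoff P-space is finite. -/
/-!
Zero sets are Gδ, hence clopen in a P-space, so a Tychonoff P-space has a basis of clopen sets.
An infinite set `A` in a Hausdorff space contains points `x n` with open sets `O n` such that
`x m ∈ O n ↔ m = n`; shrinking `O n` to clopen `V n`, the sets `V n ∪ (⋃ m, V m)ᶜ` form a
clopen cover (the complement of the union is clopen by the P-space property), and the index of the
first member of this cover containing a point is a locally constant function taking the value `n`
at `x n`, hence a continuous function unbounded on `A`.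
-/

open Set Topology

def IsPSpace (X : Type*) [TopologicalSpace X] : Prop :=
  ∀ s : ℕ → Set X, (∀ n, IsOpen (s n)) → IsOpen (⋂ n, s n)

section General

variable {X : Type*} [TopologicalSpace X]

theorem isClopen_disjointed {s : ℕ → Set X} (hs : ∀ n, IsClopen (s n)) (n : ℕ) :
    IsClopen (disjointed s n) :=
  disjointedRec (fun _ i ht ↦ ht.diff (hs i)) (hs n)

theorem isLocallyConstant_find_of_isClopen {s : ℕ → Set X} (hs : ∀ n, IsClopen (s n))
    (H : ∀ x, ∃ n, x ∈ s n) [∀ x n, Decidable (x ∈ s n)] :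
    IsLocallyConstant fun x ↦ Nat.find (H x) :=
  IsLocallyConstant.iff_isOpen_fiber.2 fun n ↦
    preimage_find_eq_disjointed s H n ▸ (isClopen_disjointed hs n).isOpen

theorem Set.Infinite.exists_seq_isOpen_mem_iff [T2Space X] {A : Set X} (hA : A.Infinite) :
    ∃ (x : ℕ → X) (O : ℕ → Set X), (∀ n, x n ∈ A) ∧ (∀ n, IsOpen (O n)) ∧
      ∀ m n, x m ∈ O n ↔ m = n := by
  have : Infinite A := hA.to_subtype
  obtain ⟨U, hU_inf, hU_open, hU_disj⟩ := exists_seq_infinite_isOpen_pairwise_disjoint A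
  choose x hxU using fun n ↦ (hU_inf n).nonempty
  choose O hO_open hO using fun n ↦ isOpen_induced_iff.1 (hU_open n)
  refine ⟨fun n ↦ x n, O, fun n ↦ (x n).2, hO_open, fun m n ↦ ⟨fun hm ↦ ?_, ?_⟩⟩
  · have hmn : x m ∈ U n := hO n ▸ hm
    exact hU_disj.eq (not_disjoint_iff.2 ⟨x m, hxU m, hmn⟩)
  · rintro rfl
    exact (hO m ▸ hxU m :)

end General

namespace IsPSpace

variable {X : Type*} [TopologicalSpace X]

theorem isOpen_of_isGδ (hX : IsPSpace X) {s : Set X} (hs : IsGδ s) : IsOpen s := by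
  obtain ⟨t, ht, rfl⟩ := isGδ_iff_eq_iInter_nat.1 hs
  exact hX t ht

theorem isClosed_iUnion (hX : IsPSpace X) {s : ℕ → Set X} (hs : ∀ n, IsClosed (s n)) :
    IsClosed (⋃ n, s n) := by
  rw [← isOpen_compl_iff, compl_iUnion]
  exact hX _ fun n ↦ (hs n).isOpen_compl

theorem isClopen_preimage {Y : Type*} [TopologicalSpace Y] [PerfectlyNormalSpace Y]
    (hX : IsPSpace X) {f : X → Y} (hf : Continuous f) {s : Set Y} (hs : IsClosed s) :
    IsClopen (f ⁻¹' s) :=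
  ⟨hs.preimage hf, hX.isOpen_of_isGδ (hs.isGδ.preimage hf)⟩

theorem exists_isClopen_mem_subset [CompletelyRegularSpace X] (hX : IsPSpace X) {O : Set X}
    (hO : IsOpen O) {x : X} (hx : x ∈ O) : ∃ V, IsClopen V ∧ x ∈ V ∧ V ⊆ O := by
  obtain ⟨f, hf, hfx, hf_one⟩ :=
    CompletelyRegularSpace.completely_regular x Oᶜ hO.isClosed_compl (not_not_intro hx)
  refine ⟨f ⁻¹' {0}, hX.isClopen_preimage hf isClosed_singleton, hfx, fun y hy ↦ ?_⟩
  by_contra hyO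
  exact zero_ne_one ((hy : f y = 0).symm.trans (hf_one hyO))

theorem exists_continuous_eq_nat_of_infinite [T2Space X] [CompletelyRegularSpace X]
    (hX : IsPSpace X) {A : Set X} (hA : A.Infinite) :
    ∃ f : X → ℝ, Continuous f ∧ ∀ n : ℕ, ∃ x ∈ A, f x = n := by
  classical
  obtain ⟨x, O, hxA, hO_open, hxO⟩ := hA.exists_seq_isOpen_mem_iff
  choose V hV_clopen hxV hVO using fun n ↦ hX.exists_isClopen_mem_subset (hO_open n)
    ((hxO n n).2 rfl)
  have hV_iff (m n : ℕ) : x m ∈ V n ↔ m = n :=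
    ⟨fun h ↦ (hxO m n).1 (hVO n h), by rintro rfl; exact hxV m⟩
  set s : ℕ → Set X := fun n ↦ V n ∪ (⋃ m, V m)ᶜ
  have hs_clopen (n : ℕ) : IsClopen (s n) :=
    (hV_clopen n).union ⟨(isOpen_iUnion fun m ↦ (hV_clopen m).isOpen).isClosed_compl,
      (hX.isClosed_iUnion fun m ↦ (hV_clopen m).isClosed).isOpen_compl⟩
  have hs_cover (y : X) : ∃ n, y ∈ s n := by
    by_cases hy : y ∈ ⋃ m, V m
    · obtain ⟨n, hn⟩ := mem_iUnion.1 hy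
      exact ⟨n, Or.inl hn⟩
    · exact ⟨0, Or.inr hy⟩
  have hxs (m n : ℕ) : x m ∈ s n ↔ m = n := by
    simp only [s, mem_union, mem_compl_iff, mem_iUnion, hV_iff, exists_eq', not_true, or_false]
  refine ⟨fun y ↦ (Nat.find (hs_cover y) : ℝ),
    ((isLocallyConstant_find_of_isClopen hs_clopen hs_cover).comp Nat.cast).continuous,
    fun n ↦ ⟨x n, hxA n, ?_⟩⟩
  rw [Nat.cast_inj, Nat.find_eq_iff]
  exact ⟨(hxs n n).2 rfl, fun m hm h ↦ hm.ne' ((hxs n m).1 h)⟩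

end IsPSpace

/-- Every functionally bounded subset of a Tychonoff P-space is finite. -/
theorem stmt_0 {X : Type*} [TopologicalSpace X] [T2Space X] [CompletelyRegularSpace X]
    (hP : ∀ s : ℕ → Set X, (∀ n, IsOpen (s n)) → IsOpen (⋂ n, s n))
    (A : Set X) (hA : ∀ f : X → ℝ, Continuous f → ∃ C, ∀ x ∈ A, |f x| ≤ C) :
    A.Finite := by
  by_contra hA_inf
  obtain ⟨f, hf, hf_nat⟩ := IsPSpace.exists_continuous_eq_nat_of_infinite hP hA_inf
  obtain ⟨C, hC⟩ := hA f hf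
  obtain ⟨n, hn⟩ := exists_nat_gt C
  obtain ⟨x, hxA, hfx⟩ := hf_nat n
  have := hC x hxA
  rw [hfx, Nat.abs_cast] at this
  exact this.not_gt hn
end

section
/- If X is a P-space, then every sequence of continuous real-valued functions on X is equicontinuous (at every point of X). -/
/-! In a P-space every neighbourhood filter is closed under countable intersections. Given an
entourage `U`, each `f n` is `U`-close to its value at `x` on some neighbourhood of `x`, and the
intersection of these countably many neighbourhoods is the neighbourhood that equicontinuity
asks for. -/

open Filter Set Topology

theorem countableInterFilter_nhds_of_isOpen_iInter {X : Type*} [TopologicalSpace X]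
    (hP : ∀ s : ℕ → Set X, (∀ n, IsOpen (s n)) → IsOpen (⋂ n, s n)) (x : X) :
    CountableInterFilter (𝓝 x) where
  countable_sInter_mem S hS hSx := by
    rcases S.eq_empty_or_nonempty with rfl | hne
    · simp
    obtain ⟨s, rfl⟩ := hS.exists_eq_range hne
    rw [sInter_range]
    have hx : x ∈ ⋂ n, interior (s n) :=
      mem_iInter.2 fun n => mem_interior_iff_mem_nhds.2 (hSx _ (mem_range_self n))
    exact mem_of_superset ((hP _ fun _ => isOpen_interior).mem_nhds hx)
      (iInter_mono fun _ => interior_subset)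

theorem equicontinuousAt_of_countableInterFilter_nhds {ι X α : Type*} [Countable ι]
    [TopologicalSpace X] [UniformSpace α] {x : X} [CountableInterFilter (𝓝 x)]
    {F : ι → X → α} (hF : ∀ i, ContinuousAt (F i) x) : EquicontinuousAt F x :=
  fun _ hU => eventually_countable_forall.2 fun i => hF i (mem_nhds_left _ hU)

/-- If `X` is a P-space, then every sequence of continuous real-valued functions on `X`
is equicontinuous. -/
theorem stmt_3 {X : Type*} [TopologicalSpace X]
    (hP : ∀ s : ℕ → Set X, (∀ n, IsOpen (s n)) → IsOpen (⋂ n, s n))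
    (f : ℕ → C(X, ℝ)) :
    Equicontinuous (fun n => (f n : X → ℝ)) := fun x =>
  haveI := countableInterFilter_nhds_of_isOpen_iInter hP x
  equicontinuousAt_of_countableInterFilter_nhds fun n => (f n).continuous.continuousAt
end

section
/- Let X be a Tychonoff space in which every compact subset is finite, let {U_n : n ∈ ℕ} be a family of pairwise disjoint open subsets of X. Then the set K = {0} ∪ {1_{U_n} : n ∈ ℕ}, consisting of the zero function together with the indicator functions of the sets U_n, is a compact subset of C(X) endowed with the compact-open topology. -/
open Filter Function Set Topology

theorem Set.Finite.finite_setOf_inter_nonempty_of_pairwise_disjoint {ι α : Type*}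
    {U : ι → Set α} {K : Set α} (hK : K.Finite) (hU : Pairwise (Disjoint on U)) :
    {i | (U i ∩ K).Nonempty}.Finite := by
  refine (hK.biUnion fun x _ =>
    (subsingleton_setOfPred_mem_iff_pairwise_disjoint.2 hU x).finite).subset ?_
  rintro i ⟨x, hxU, hxK⟩
  exact mem_biUnion hxK hxU

theorem ContinuousMap.tendsto_of_forall_isCompact_eventually_eqOn {ι X Y : Type*}
    [TopologicalSpace X] [TopologicalSpace Y] {l : Filter ι} {F : ι → C(X, Y)} {g : C(X, Y)}
    (h : ∀ K, IsCompact K → ∀ᶠ i in l, EqOn g (F i) K) : Tendsto F l (𝓝 g) :=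
  tendsto_nhds_compactOpen.2 fun K hK _ _ hgK => (h K hK).mono fun _ hi => hgK.congr hi

/-- A compact set is finite, hence meets only finitely many `U i`, and `F i` vanishes on it
for all other `i`. -/
theorem ContinuousMap.tendsto_cofinite_zero_of_support_subset {ι X Y : Type*}
    [TopologicalSpace X] [TopologicalSpace Y] [Zero Y]
    (hcpt : ∀ K : Set X, IsCompact K → K.Finite) {U : ι → Set X}
    (hU : Pairwise (Disjoint on U)) {F : ι → C(X, Y)} (hF : ∀ i, support (F i) ⊆ U i) :
    Tendsto F cofinite (𝓝 0) := by
  refine tendsto_of_forall_isCompact_eventually_eqOn fun K hK => ?_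
  filter_upwards [((hcpt K hK).finite_setOf_inter_nonempty_of_pairwise_disjoint hU)
    |>.eventually_cofinite_notMem] with i hi x hxK
  exact (notMem_support.1 fun hx => hi ⟨x, hF i hx, hxK⟩).symm

theorem stmt_5_general {X : Type*} [TopologicalSpace X]
    (hcpt : ∀ K : Set X, IsCompact K → K.Finite)
    (U : ℕ → Set X)
    (hdisj : ∀ m n, m ≠ n → Disjoint (U m) (U n))
    (f : ℕ → C(X, ℝ)) (hf : ∀ n x, f n x = (U n).indicator 1 x) :
    IsCompact ({0} ∪ Set.range f : Set C(X, ℝ)) := by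
  have hsupp (n : ℕ) : support (f n) ⊆ U n := by
    rw [show ⇑(f n) = (U n).indicator 1 from funext (hf n)]
    exact support_indicator_subset
  rw [← insert_eq]
  exact (ContinuousMap.tendsto_cofinite_zero_of_support_subset hcpt hdisj hsupp)
    |>.isCompact_insert_range_of_cofinite

/-- If every compact subset of a Tychonoff space `X` is finite and `(U n)` are pairwise
disjoint clopen subsets of `X`, then the set consisting of the zero function and the
indicator functions of the sets `U n` is compact in `C(X,ℝ)` with the compact-open topology. -/
theorem stmt_5 {X : Type*} [TopologicalSpace X] [T2Space X] [CompletelyRegularSpace X]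
    (hcpt : ∀ K : Set X, IsCompact K → K.Finite)
    (U : ℕ → Set X) (hclopen : ∀ n, IsClopen (U n))
    (hdisj : ∀ m n, m ≠ n → Disjoint (U m) (U n))
    (f : ℕ → C(X, ℝ)) (hf : ∀ n x, f n x = (U n).indicator 1 x) :
    IsCompact ({0} ∪ Set.range f : Set C(X, ℝ)) :=
  stmt_5_general hcpt U hdisj f hf
end

section
/- Suppose a Tychonoff space X admits a countable family {U_i : i ∈ ℕ} of open subsets, points a_i ∈ U_i, and a point z ∈ X such that every compact subset of X meets only finitely many U_i, and z is a cluster point of the set {a_i : i ∈ ℕ}. Then X is not a sequentially Ascoli space. -/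
/-!
Separate each `a i` from the complement of `U i` by a continuous bump `f i` with `f i (a i) = 1`
vanishing off `U i`. A compact set meets only finitely many `U i`, so on it the bumps are
eventually zero: `f i → 0` in the compact-open topology. The point `z` lies in only finitely
many `U i` (apply the hypothesis to `{z}`), so every neighbourhood of `z` contains some `a i` with
`z ∉ U i`, where `f i (a i) - f i z = 1`; hence the sequence is not equicontinuous at `z`.
-/

open Filter Set Topology

lemma CompletelyRegularSpace.exists_continuousMap_eq_one_eqOn_compl
    {X : Type*} [TopologicalSpace X] [CompletelyRegularSpace X]
    {U : Set X} (hU : IsOpen U) {x : X} (hx : x ∈ U) :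
    ∃ f : C(X, ℝ), f x = 1 ∧ EqOn f 0 Uᶜ := by
  obtain ⟨f, hf, hfx, hfU⟩ := CompletelyRegularSpace.completely_regular_isOpen x U hU hx
  refine ⟨⟨fun y => 1 - (f y : ℝ), by fun_prop⟩, by simp [hfx], fun y hy => ?_⟩
  simp [hfU hy]

lemma ContinuousMap.tendsto_cofinite_of_eqOn_compl
    {X Y ι : Type*} [TopologicalSpace X] [UniformSpace Y]
    {U : ι → Set X} (hU : ∀ K : Set X, IsCompact K → {i | (K ∩ U i).Nonempty}.Finite)
    {f : ι → C(X, Y)} {g : C(X, Y)} (hf : ∀ i, EqOn (f i) g (U i)ᶜ) :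
    Tendsto f cofinite (𝓝 g) := by
  rw [ContinuousMap.tendsto_iff_forall_isCompact_tendstoUniformlyOn]
  intro K hK
  refine (ContinuousMap.tendsto_iff_forall_isCompact_tendstoUniformlyOn.1
    (tendsto_const_nhds (x := g)) K hK).congr ?_
  filter_upwards [(hU K hK).eventually_cofinite_notMem] with i hi x hx
  exact (hf i fun hxU => hi ⟨x, hx, hxU⟩).symm

lemma exists_notMem_apply_mem_of_forall_mem_nhds
    {X ι : Type*} [TopologicalSpace X] [T1Space X] {a : ι → X} {z : X}
    (hz : ∀ V ∈ 𝓝 z, ∃ i, a i ∈ V ∧ a i ≠ z) {S : Set ι} (hS : S.Finite)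
    {V : Set X} (hV : V ∈ 𝓝 z) : ∃ i ∉ S, a i ∈ V := by
  have hzF : z ∉ a '' S \ {z} := fun h => h.2 rfl
  obtain ⟨i, ⟨hiV, hiF⟩, hiz⟩ :=
    hz _ (sdiff_mem hV (((hS.image a).sdiff).isClosed.compl_mem_nhds hzF))
  exact ⟨i, fun hiS => hiF ⟨mem_image_of_mem a hiS, hiz⟩, hiV⟩

/-- A Tychonoff space admitting open sets `U i`, points `a i ∈ U i` and a point `z` such that
every compact set meets only finitely many `U i` and `z` is a cluster point of `{a i}`,
is not sequentially Ascoli. -/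
theorem stmt_7 {X : Type*} [TopologicalSpace X] [T2Space X] [CompletelyRegularSpace X]
    (U : ℕ → Set X) (hU : ∀ i, IsOpen (U i))
    (a : ℕ → X) (ha : ∀ i, a i ∈ U i)
    (hcpt : ∀ K : Set X, IsCompact K → {i | (K ∩ U i).Nonempty}.Finite)
    (z : X) (hz : ∀ V ∈ nhds z, ∃ i, a i ∈ V ∧ a i ≠ z) :
    ¬ (∀ (f : ℕ → C(X, ℝ)) (g : C(X, ℝ)), Filter.Tendsto f Filter.atTop (nhds g) →
        Equicontinuous (fun n => (f n : X → ℝ))) := by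
  intro hAscoli
  choose f hfa hf0 using fun i =>
    CompletelyRegularSpace.exists_continuousMap_eq_one_eqOn_compl (hU i) (ha i)
  have htend : Tendsto f atTop (𝓝 0) :=
    Nat.cofinite_eq_atTop ▸ ContinuousMap.tendsto_cofinite_of_eqOn_compl hcpt hf0
  have hzU : {i | z ∈ U i}.Finite :=
    (hcpt {z} isCompact_singleton).subset fun i hi => ⟨z, rfl, hi⟩
  obtain ⟨V, hV, hVf⟩ := eventually_iff_exists_mem.1 <|
    Metric.equicontinuousAt_iff_right.1 (hAscoli f 0 htend z) 1 one_pos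
  obtain ⟨j, hjz, hjV⟩ := exists_notMem_apply_mem_of_forall_mem_nhds hz hzU hV
  have := hVf (a j) hjV j
  simp [hfa, hf0 j hjz, Real.dist_eq] at this
end

section
/- Let X be a countable non-discrete Tychonoff space in which every compact subset is finite. Then X is not a sequentially Ascoli space, i.e., there exists a sequence of continuous functions converging to 0 in the compact-open topology on C(X) that is not equicontinuous. -/
/-!
Enumerate `X = {x₀, x₁, …}` and fix a non-isolated point `z`. Complete regularity gives
`fₙ ∈ C(X)` with `fₙ(xₙ) = 1` (when `xₙ ≠ z`) vanishing on the finite closed set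
`{z, x₀, …, xₙ₋₁}`. Each point is a zero of almost every `fₙ`, so `fₙ → 0` pointwise, which is
compact-open convergence because compact sets are finite. But every neighbourhood of `z`
contains some `xₙ ≠ z`, where `fₙ` jumps from `fₙ(z) = 0` to `1`.
-/

open Filter Set Topology

theorem Set.Finite.tendstoUniformlyOn_of_tendsto {α β ι : Type*} [UniformSpace β]
    {F : ι → α → β} {f : α → β} {p : Filter ι} {s : Set α} (hs : s.Finite)
    (h : ∀ x ∈ s, Tendsto (F · x) p (𝓝 (f x))) : TendstoUniformlyOn F f p s :=
  fun _ hu => hs.eventually_all.2 fun x hx => h x hx (mem_nhds_left (f x) hu)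

theorem ContinuousMap.tendsto_of_tendsto_of_forall_isCompact_finite
    {X Y ι : Type*} [TopologicalSpace X] [UniformSpace Y] {F : ι → C(X, Y)} {f : C(X, Y)}
    {p : Filter ι} (hcpt : ∀ K : Set X, IsCompact K → K.Finite)
    (h : ∀ x, Tendsto (F · x) p (𝓝 (f x))) : Tendsto F p (𝓝 f) :=
  tendsto_iff_forall_isCompact_tendstoUniformlyOn.2 fun K hK =>
    (hcpt K hK).tendstoUniformlyOn_of_tendsto fun x _ => h x

theorem not_equicontinuousAt_of_forall_ne {X α ι : Type*} [TopologicalSpace X]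
    [PseudoMetricSpace α] {F : ι → X → α} {z : X} [(𝓝[≠] z).NeBot] {ε : ℝ} (hε : 0 < ε)
    (h : ∀ x ≠ z, ∃ i, ε ≤ dist (F i z) (F i x)) : ¬EquicontinuousAt F z := by
  intro hF
  have hnear : ∀ᶠ x in 𝓝[≠] z, ∀ i, dist (F i z) (F i x) < ε :=
    nhdsWithin_le_nhds (Metric.equicontinuousAt_iff_right.1 hF ε hε)
  obtain ⟨x, hx, hxz⟩ := (hnear.and self_mem_nhdsWithin).exists
  obtain ⟨i, hi⟩ := h x hxz
  exact (hi.trans_lt (hx i)).false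

theorem CompletelyRegularSpace.exists_continuousMap_eq_one_eqOn_zero {X : Type*}
    [TopologicalSpace X] [CompletelyRegularSpace X] {s : Set X} (hs : IsClosed s) {x : X}
    (hx : x ∉ s) : ∃ g : C(X, ℝ), g x = 1 ∧ EqOn g 0 s := by
  obtain ⟨g, hg, hgx, hgs⟩ := completely_regular x s hs hx
  refine ⟨⟨fun y => 1 - (g y : ℝ), by fun_prop⟩, by simp [hgx], fun y hy => ?_⟩
  simp [hgs hy]

theorem exists_seq_continuousMap_eventually_eq_zero_of_countable {X : Type*}
    [TopologicalSpace X] [CompletelyRegularSpace X] [T1Space X] [Countable X] [Infinite X]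
    (z : X) : ∃ f : ℕ → C(X, ℝ), (∀ n, f n z = 0) ∧ (∀ x, ∀ᶠ n in atTop, f n x = 0) ∧
      ∀ x ≠ z, ∃ n, f n x = 1 := by
  obtain ⟨e⟩ : Nonempty (ℕ ≃ X) := nonempty_equiv_of_countable
  have hbump : ∀ n, ∃ g : C(X, ℝ), (e n ≠ z → g (e n) = 1) ∧ EqOn g 0 (insert z (e '' Iio n)) := by
    intro n
    by_cases hn : e n = z
    · exact ⟨0, fun h => absurd hn h, fun _ _ => rfl⟩
    have hmem : e n ∉ insert z (e '' Iio n) := by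
      rintro (h | ⟨m, hm, hmn⟩)
      · exact hn h
      · exact (mem_Iio.1 hm).ne (e.injective hmn)
    obtain ⟨g, hg1, hg0⟩ := CompletelyRegularSpace.exists_continuousMap_eq_one_eqOn_zero
      (((finite_Iio n).image e).insert z).isClosed hmem
    exact ⟨g, fun _ => hg1, hg0⟩
  choose f hf1 hf0 using hbump
  refine ⟨f, fun n => hf0 n (mem_insert z _), fun x => ?_, fun x hx => ⟨e.symm x, ?_⟩⟩
  · filter_upwards [eventually_gt_atTop (e.symm x)] with n hn
    exact hf0 n (mem_insert_of_mem z ⟨e.symm x, hn, e.apply_symm_apply x⟩)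
  · simpa using hf1 (e.symm x) (by simpa using hx)

/-- A countable non-discrete Tychonoff space all of whose compact subsets are finite
is not sequentially Ascoli: there is a sequence in `C(X,ℝ)` converging to `0` in the
compact-open topology that is not equicontinuous. -/
theorem stmt_8 {X : Type*} [TopologicalSpace X] [T2Space X] [CompletelyRegularSpace X]
    [Countable X] (hnd : ¬ DiscreteTopology X)
    (hcpt : ∀ K : Set X, IsCompact K → K.Finite) :
    ∃ f : ℕ → C(X, ℝ), Filter.Tendsto f Filter.atTop (nhds 0) ∧
      ¬ Equicontinuous (fun n => (f n : X → ℝ)) := by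
  obtain ⟨z, hz⟩ : ∃ z : X, (𝓝[≠] z).NeBot := by
    simpa [discreteTopology_iff_nhds_ne, neBot_iff] using hnd
  have : Infinite X := not_finite_iff_infinite.1 fun _ => hnd inferInstance
  obtain ⟨f, hfz, hf0, hf1⟩ := exists_seq_continuousMap_eventually_eq_zero_of_countable z
  refine ⟨f, ContinuousMap.tendsto_of_tendsto_of_forall_isCompact_finite hcpt
    fun x => tendsto_nhds_of_eventually_eq (hf0 x), fun h => ?_⟩
  refine not_equicontinuousAt_of_forall_ne one_pos (fun x hx => ?_) (h z)
  obtain ⟨n, hn⟩ := hf1 x hx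
  exact ⟨n, by simp [hfz, hn]⟩
end

section
/- Every Lindelöf Tychonoff space is a μ-space: every functionally bounded subset of a Lindelöf Tychonoff space has compact closure. -/
/-!
A regular Lindelöf space is normal. If an infinite subset `S` of a closed functionally bounded
set had no accumulation point, `S` would be closed and discrete, and Tietze would extend an
unbounded function on `S` to the whole space. So the closure of a functionally bounded set is
countably compact; being also Lindelöf, it is compact.
-/

open Filter Topology Function

section FunctionallyBounded

variable {X : Type*} [TopologicalSpace X]

def IsFunctionallyBounded (A : Set X) : Prop :=
  ∀ f : X → ℝ, Continuous f → ∃ C, ∀ x ∈ A, |f x| ≤ C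

theorem IsFunctionallyBounded.mono {A B : Set X} (hA : IsFunctionallyBounded A) (hBA : B ⊆ A) :
    IsFunctionallyBounded B := fun f hf =>
  (hA f hf).imp fun _ hC x hx => hC x (hBA hx)

theorem IsFunctionallyBounded.closure {A : Set X} (hA : IsFunctionallyBounded A) :
    IsFunctionallyBounded (closure A) := fun f hf =>
  (hA f hf).imp fun _ hC => closure_minimal hC (isClosed_le hf.abs continuous_const)

theorem not_isFunctionallyBounded_of_isClosed_of_isDiscrete [NormalSpace X] {S : Set X}
    (hS : IsClosed S) (hSd : IsDiscrete S) (hinf : S.Infinite) : ¬ IsFunctionallyBounded S := by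
  have := isDiscrete_iff_discreteTopology.mp hSd
  let e := hinf.natEmbedding
  let f : C(S, ℝ) := ⟨fun s => ((invFun e s : ℕ) : ℝ), continuous_of_discreteTopology⟩
  obtain ⟨g, hg⟩ := f.exists_restrict_eq hS
  have hge : ∀ n : ℕ, g (e n) = n := fun n => by
    rw [← ContinuousMap.restrict_apply, hg]
    simp [f, leftInverse_invFun e.injective n]
  intro hb
  obtain ⟨C, hC⟩ := hb g g.continuous
  obtain ⟨n, hn⟩ := exists_nat_gt C
  have hle := hC (e n) (e n).2
  rw [hge] at hle
  linarith [le_abs_self (n : ℝ)]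

theorem IsFunctionallyBounded.isCountablyCompact [NormalSpace X] [T1Space X] {A : Set X}
    (hA : IsFunctionallyBounded A) (hcl : IsClosed A) : IsCountablyCompact A := by
  refine isCountablyCompact_iff_infinite_subset_has_accPt.mpr fun S hSA hinf => ?_
  by_contra! hno
  have hdisj : ∀ x, Disjoint (𝓝[≠] x) (𝓟 S) := fun x => by
    rw [disjoint_iff]
    by_contra hne
    have hacc : AccPt x (𝓟 S) := ⟨hne⟩
    have hxS := mem_closure_iff_clusterPt.mpr hacc.clusterPt
    exact hno x (closure_minimal hSA hcl hxS) hacc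
  obtain ⟨hSc, hSd⟩ := isClosed_and_discrete_iff.mpr hdisj
  exact not_isFunctionallyBounded_of_isClosed_of_isDiscrete hSc hSd hinf (hA.mono hSA)

end FunctionallyBounded

/-- Every Lindelöf Tychonoff space is a μ-space: every functionally bounded subset has
compact closure. -/
theorem stmt_10 {X : Type*} [TopologicalSpace X] [T2Space X] [CompletelyRegularSpace X]
    [LindelofSpace X]
    (A : Set X) (hA : ∀ f : X → ℝ, Continuous f → ∃ C, ∀ x ∈ A, |f x| ≤ C) :
    IsCompact (closure A) :=
  isClosed_closure.isLindelof.isCompact <|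
    IsFunctionallyBounded.closure hA |>.isCountablyCompact isClosed_closure
end

section
/- Let X be a topological space, z ∈ X, and {U_i : i ∈ I} pairwise disjoint open subsets of X with z in the closure of ⋃_i {x ∈ X : g_i(x) ≥ 1}, where each g_i : X → [0,2] is continuous with support contained in U_i and z ∉ U_i for all i. Then the family {2g_i : i ∈ I} is not equicontinuous at z. -/
theorem not_equicontinuousAt_of_mem_closure_iUnion_dist_ge {ι X α : Type*} [TopologicalSpace X]
    [PseudoMetricSpace α] {F : ι → X → α} {z : X} {ε : ℝ} (hε : 0 < ε)
    (hz : z ∈ closure (⋃ i, {x | ε ≤ dist (F i x) (F i z)})) :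
    ¬ EquicontinuousAt F z := by
  intro hF
  obtain ⟨V, hV, hVclose⟩ := ((Metric.equicontinuousAt_iff_right.mp hF) ε hε).exists_mem
  obtain ⟨x, hxV, hxfar⟩ := mem_closure_iff_nhds.mp hz V hV
  obtain ⟨i, hi⟩ := Set.mem_iUnion.mp hxfar
  exact (hVclose x hxV i).not_ge (by rw [dist_comm]; exact hi)

theorem stmt_19_general {X : Type*} [TopologicalSpace X]
    {I : Type*} (z : X) (U : I → Set X)
    (g : I → X → ℝ)
    (hsupp : ∀ i, tsupport (g i) ⊆ U i)
    (hzU : ∀ i, z ∉ U i)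
    (hcl : z ∈ closure (⋃ i, {x | 1 ≤ g i x})) :
    ¬ EquicontinuousAt (fun i => fun x => 2 * g i x) z := by
  have hz0 : ∀ i, g i z = 0 := fun i =>
    image_eq_zero_of_notMem_tsupport fun hz => hzU i (hsupp i hz)
  refine not_equicontinuousAt_of_mem_closure_iUnion_dist_ge two_pos (closure_mono ?_ hcl)
  refine Set.iUnion_mono fun i x (hx : 1 ≤ g i x) => ?_
  simp only [Set.mem_ofPred_eq, hz0 i, mul_zero, Real.dist_eq, sub_zero]
  rw [abs_of_nonneg (by linarith)]
  linarith

/-- If `g i : X → [0,2]` are continuous with supports in pairwise disjoint open sets `U i`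
avoiding `z`, and `z` lies in the closure of `⋃ i, {x | g i x ≥ 1}`, then the family
`{2 g i}` is not equicontinuous at `z`. -/
theorem stmt_19 {X : Type*} [TopologicalSpace X]
    {I : Type*} (z : X) (U : I → Set X) (hopen : ∀ i, IsOpen (U i))
    (hdisj : ∀ i j, i ≠ j → Disjoint (U i) (U j))
    (g : I → X → ℝ) (hc : ∀ i, Continuous (g i))
    (hrange : ∀ i x, g i x ∈ Set.Icc (0 : ℝ) 2)
    (hsupp : ∀ i, tsupport (g i) ⊆ U i)
    (hzU : ∀ i, z ∉ U i)
    (hcl : z ∈ closure (⋃ i, {x | 1 ≤ g i x})) :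
    ¬ EquicontinuousAt (fun i => fun x => 2 * g i x) z :=
  stmt_19_general z U g hsupp hzU hcl
end
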